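/- Let m be a positive integer and y real with 0 < 2y < m. Then |₁F₁(1; m+2; -y) - (1 + y/m)^{-1}| ≤ M/m with M = 6 + 432/(e·log 2)³. -/

import Mathlib

/-!
Compare termwise with the geometric series `∑ (-y/m)^k = (1 + y/m)⁻¹`. Since
`(m+2)⋯(m+k+1) ≥ m^k`, the `k`-th terms differ by at most `(y/m)^k (2 + 3 + ⋯ + (k+1)) / m`,
and for `y/m ≤ 1/2` these bounds sum to `6/m`, because
`∑ₖ (C(k+2, 2) - 1) 2⁻ᵏ = 8 - 2`.
-/

/-- The Kummer function `₁F₁(1; m+2; z) = Σ_{k≥0} z^k / ((m+2)(m+3)⋯(m+k+1))`. -/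
noncomputable def kummer1F1 (m : ℕ) (z : ℝ) : ℝ :=
  ∑' k : ℕ, z ^ k / ∏ i ∈ Finset.range k, ((m : ℝ) + 2 + (i : ℝ))

open Finset

lemma pow_card_le_prod_add {ι : Type*} (s : Finset ι) {a : ℝ} (ha : 0 ≤ a) {c : ι → ℝ}
    (hc : ∀ i ∈ s, 0 ≤ c i) : a ^ #s ≤ ∏ i ∈ s, (a + c i) := by
  rw [← prod_const]
  exact prod_le_prod (fun _ _ ↦ ha) fun i hi ↦ le_add_of_nonneg_right (hc i hi)

lemma inv_pow_sub_inv_prod_add_le {a : ℝ} (ha : 0 < a) {c : ℕ → ℝ} (hc : ∀ i, 0 ≤ c i) (k : ℕ) :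
    (a ^ k)⁻¹ - (∏ i ∈ range k, (a + c i))⁻¹ ≤ (∑ i ∈ range k, c i) / a ^ (k + 1) := by
  induction k with
  | zero => simp
  | succ k ih =>
    set P := ∏ i ∈ range k, (a + c i)
    have hP : a ^ k ≤ P := by
      simpa using pow_card_le_prod_add (range k) ha.le fun i _ ↦ hc i
    have hc' : 0 ≤ c k := hc k
    have hstep : a⁻¹ - (a + c k)⁻¹ ≤ c k / a ^ 2 := by
      rw [inv_sub_inv ha.ne' (by positivity), add_sub_cancel_left, sq]
      gcongr
      linarith
    calc (a ^ (k + 1))⁻¹ - (∏ i ∈ range (k + 1), (a + c i))⁻¹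
        = a⁻¹ * ((a ^ k)⁻¹ - P⁻¹) + P⁻¹ * (a⁻¹ - (a + c k)⁻¹) := by
          rw [prod_range_succ, pow_succ, mul_inv, mul_inv]; ring
      _ ≤ a⁻¹ * ((∑ i ∈ range k, c i) / a ^ (k + 1)) + (a ^ k)⁻¹ * (c k / a ^ 2) := by
          gcongr
          exact sub_nonneg.mpr (inv_anti₀ ha (le_add_of_nonneg_right hc'))
      _ = (∑ i ∈ range (k + 1), c i) / a ^ (k + 1 + 1) := by
          rw [sum_range_succ]; field_simp; ring

lemma sum_range_two_add_eq_choose (k : ℕ) :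
    ∑ i ∈ range k, ((2 : ℝ) + i) = (k + 2).choose 2 - 1 := by
  induction k with
  | zero => simp
  | succ k ih =>
    rw [sum_range_succ, ih, Nat.cast_choose_two, Nat.cast_choose_two]
    push_cast; ring

lemma hasSum_sum_range_two_add_mul_half_pow :
    HasSum (fun k : ℕ ↦ (∑ i ∈ range k, ((2 : ℝ) + i)) * (1 / 2) ^ k) 6 := by
  have h := (hasSum_choose_mul_geometric_of_norm_lt_one (𝕜 := ℝ) 2
    (r := 1 / 2) (by norm_num)).sub hasSum_geometric_two
  have hterm : (fun k : ℕ ↦ (∑ i ∈ range k, ((2 : ℝ) + i)) * (1 / 2) ^ k) =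
      fun k ↦ ((k + 2).choose 2 : ℝ) * (1 / 2) ^ k - (1 / 2) ^ k := by
    funext k; rw [sum_range_two_add_eq_choose]; ring
  rw [hterm, show (6 : ℝ) = 1 / (1 - 1 / 2) ^ (2 + 1) - 2 by norm_num]
  exact h

lemma norm_tsum_sub_tsum_le {E : Type*} [NormedAddCommGroup E] [CompleteSpace E] {f g : ℕ → E}
    {u : ℕ → ℝ} {s : ℝ} (hg : Summable g) (hu : HasSum u s) (hfg : ∀ k, ‖f k - g k‖ ≤ u k) :
    ‖∑' k, f k - ∑' k, g k‖ ≤ s := by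
  have hdiff : Summable (fun k ↦ f k - g k) := .of_norm_bounded hu.summable hfg
  have hf : Summable f := by simpa using hdiff.add hg
  rw [← hf.tsum_sub hg]
  exact tsum_of_norm_bounded hu hfg

lemma abs_kummer_term_sub_geometric_le {a : ℝ} (ha : 0 < a) {y : ℝ} (hy : 0 ≤ y) (k : ℕ) :
    |(-y) ^ k / ∏ i ∈ range k, (a + 2 + i) - (-(y / a)) ^ k|
      ≤ (y / a) ^ k * (∑ i ∈ range k, ((2 : ℝ) + i)) / a := by
  have hc (i : ℕ) : (0 : ℝ) ≤ 2 + i := by positivity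
  set P := ∏ i ∈ range k, (a + (2 + (i : ℝ)))
  have hprod : ∏ i ∈ range k, (a + 2 + i) = P := by simp only [P, add_assoc]
  have hP : a ^ k ≤ P := by simpa using pow_card_le_prod_add (range k) ha.le fun i _ ↦ hc i
  have hsplit : (-y) ^ k / P - (-(y / a)) ^ k = (-1) ^ k * (y ^ k * (P⁻¹ - (a ^ k)⁻¹)) := by
    rw [neg_eq_neg_one_mul y, neg_eq_neg_one_mul (y / a), mul_pow, mul_pow, div_pow]; ring
  rw [hprod, hsplit, abs_mul, abs_pow, abs_neg, abs_one, one_pow, one_mul, abs_mul,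
    abs_of_nonneg (pow_nonneg hy k), abs_sub_comm,
    abs_of_nonneg (sub_nonneg.mpr (inv_anti₀ (by positivity) hP))]
  calc y ^ k * ((a ^ k)⁻¹ - P⁻¹) ≤ y ^ k * ((∑ i ∈ range k, ((2 : ℝ) + i)) / a ^ (k + 1)) := by
        gcongr
        exact inv_pow_sub_inv_prod_add_le ha hc k
    _ = (y / a) ^ k * (∑ i ∈ range k, ((2 : ℝ) + i)) / a := by
        rw [div_pow]; field_simp; ring

theorem kummer1F1_approx_neg (m : ℕ) (y : ℝ) (hy : 0 < y) (hm : 2 * y < m) :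
    |kummer1F1 m (-y) - (1 + y / m)⁻¹| ≤
      (6 + 432 / (Real.exp 1 * Real.log 2) ^ 3) / m := by
  have hm0 : (0 : ℝ) < m := by linarith
  have hr : y / m ≤ 1 / 2 := by rw [div_le_iff₀ hm0]; linarith
  have hgeom : HasSum (fun k ↦ (-(y / m)) ^ k) (1 + y / m)⁻¹ := by
    have hnorm : ‖-(y / m)‖ < 1 := by
      rw [norm_neg, Real.norm_of_nonneg (by positivity)]; linarith
    simpa using hasSum_geometric_of_norm_lt_one hnorm
  have hmajorant := hasSum_sum_range_two_add_mul_half_pow.div_const (m : ℝ)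
  have hterm (k : ℕ) : ‖(-y) ^ k / ∏ i ∈ range k, ((m : ℝ) + 2 + i) - (-(y / m)) ^ k‖
      ≤ (∑ i ∈ range k, ((2 : ℝ) + i)) * (1 / 2) ^ k / m := by
    refine (abs_kummer_term_sub_geometric_le hm0 hy.le k).trans ?_
    rw [mul_comm]
    gcongr
  calc |kummer1F1 m (-y) - (1 + y / m)⁻¹|
      = ‖∑' k, (-y) ^ k / ∏ i ∈ range k, ((m : ℝ) + 2 + i) - ∑' k, (-(y / m)) ^ k‖ := by
        rw [hgeom.tsum_eq, Real.norm_eq_abs, kummer1F1]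
    _ ≤ 6 / m := norm_tsum_sub_tsum_le hgeom.summable hmajorant hterm
    _ ≤ (6 + 432 / (Real.exp 1 * Real.log 2) ^ 3) / m := by
        gcongr
        exact le_add_of_nonneg_right (by positivity)
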